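/- Let F = (x²+y²−2zt)/2 and S = (1, εi, z₀, 0) with ε ∈ {1,−1} (a point of the paraboloid at infinity). Then, as identities modulo F: α = x + iεy − tz₀, β̃ = −β/2 satisfies β̃ = −2αtz₀ (i.e. β = 4αtz₀), and γ = 4αz₀²t². Consequently the quadratic αλ₀² + βλ₀λ₁ + γλ₁² factors as α(λ₀ + 2tz₀λ₁)². -/
import Mathlib


noncomputable section
open Complex

/-- `Δ_S F = x₀x + y₀y − z₀t − t₀z` for the paraboloid `F = (x²+y²−2zt)/2`. -/
def pDelta (x0 y0 z0 t0 x y z t : ℂ) : ℂ := x0 * x + y0 * y - z0 * t - t0 * z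

/-- `Q(∇F) = x² + y² + t²` for the paraboloid. -/
def pQ (x y z t : ℂ) : ℂ := x ^ 2 + y ^ 2 + (-t) ^ 2

/-- `σ(m) = Q(∇F)(m)·S − 2Δ_S F(m)·κ(∇F)(m)` for the paraboloid. -/
def pSigma (x0 y0 z0 t0 x y z t : ℂ) : Fin 4 → ℂ :=
  fun i => pQ x y z t * (![x0, y0, z0, t0] : Fin 4 → ℂ) i -
    2 * pDelta x0 y0 z0 t0 x y z t * (![x, y, -t, 0] : Fin 4 → ℂ) i

/-- The Hessian bilinear form of `F = (x²+y²−2zt)/2`. -/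
def pHess (u v : Fin 4 → ℂ) : ℂ := u 0 * v 0 + u 1 * v 1 - u 2 * v 3 - u 3 * v 2

/-- The Hessian determinant of `F = (x²+y²−2zt)/2`. -/
def pHF : ℂ := Matrix.det !![(1 : ℂ), 0, 0, 0; 0, 1, 0, 0; 0, 0, 0, -1; 0, 0, -1, 0]

def pNS (x0 y0 z0 t0 x y z t : ℂ) : ℂ :=
  (x * t0 - x0 * t) ^ 2 + (y * t0 - y0 * t) ^ 2 + (z * t0 - z0 * t) ^ 2

def pAlpha (x0 y0 z0 t0 x y z t : ℂ) : ℂ := pDelta x0 y0 z0 t0 x y z t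

/-- `β = −2[Hess_F(S,σ) + (Δ_S F)²(F_xx+F_yy+F_zz)]`; here `F_xx+F_yy+F_zz = 1+1+0`. -/
def pBeta (x0 y0 z0 t0 x y z t : ℂ) : ℂ :=
  -2 * (pHess (![x0, y0, z0, t0] : Fin 4 → ℂ) (pSigma x0 y0 z0 t0 x y z t) +
    pDelta x0 y0 z0 t0 x y z t ^ 2 * (1 + 1 + 0))

/-- `γ = −(4Δ_S F/(d−1)²)·N_S·H_F` with `d = 2`. -/
def pGamma (x0 y0 z0 t0 x y z t : ℂ) : ℂ :=
  -(4 * pDelta x0 y0 z0 t0 x y z t / ((2 : ℂ) - 1) ^ 2) *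
    pNS x0 y0 z0 t0 x y z t * pHF

/-- For the paraboloid and `S = (1, εi, z₀, 0)` with `ε = ±1`, modulo `F`:
`α = x + iεy − tz₀`, `β = 4αtz₀` (i.e. `β̃ = −β/2 = −2αtz₀`) and `γ = 4αz₀²t²`;
consequently the quadratic factors as `α(λ₀ + 2tz₀λ₁)²`. -/
theorem stmt9 (ε : ℂ) (hε : ε = 1 ∨ ε = -1) (z0 : ℂ) (x y z t : ℂ)
    (hF : (x ^ 2 + y ^ 2 - 2 * z * t) / 2 = 0) :
    pAlpha 1 (ε * I) z0 0 x y z t = x + I * ε * y - t * z0 ∧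
    pBeta 1 (ε * I) z0 0 x y z t = 4 * pAlpha 1 (ε * I) z0 0 x y z t * t * z0 ∧
    -(pBeta 1 (ε * I) z0 0 x y z t) / 2 = -2 * pAlpha 1 (ε * I) z0 0 x y z t * t * z0 ∧
    pGamma 1 (ε * I) z0 0 x y z t = 4 * pAlpha 1 (ε * I) z0 0 x y z t * z0 ^ 2 * t ^ 2 ∧
    ∀ l0 l1 : ℂ,
      pAlpha 1 (ε * I) z0 0 x y z t * l0 ^ 2 + pBeta 1 (ε * I) z0 0 x y z t * l0 * l1 +
          pGamma 1 (ε * I) z0 0 x y z t * l1 ^ 2 =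
        pAlpha 1 (ε * I) z0 0 x y z t * (l0 + 2 * t * z0 * l1) ^ 2 := by
  have heps : ε ^ 2 = 1 := by rcases hε with h | h <;> simp [h]
  have hI : I ^ 2 = -1 := Complex.I_sq
  have hxy : x ^ 2 + y ^ 2 = 2 * z * t := by linear_combination 2 * hF
  have hdet : pHF = -1 := by
    simp [pHF, Matrix.det_succ_row_zero, Fin.sum_univ_succ]
  simp only [pAlpha, pBeta, pGamma, pDelta, pSigma, pQ, pHess, pNS, hdet,
    Matrix.cons_val_zero, Matrix.cons_val_one, Matrix.head_cons,
    Matrix.cons_val_two, Matrix.cons_val_three, Matrix.tail_cons]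
  refine ⟨by ring, ?_, ?_, ?_, ?_⟩
  · linear_combination (-2 - 2*ε^2*I^2) * hxy + (-2*t^2*ε^2 - 4*z*t*ε^2) * hI +
      (2*t^2 + 4*z*t) * heps
  · linear_combination (1 + ε^2*I^2) * hxy + (t^2*ε^2 + 2*z*t*ε^2) * hI +
      (-t^2 - 2*z*t) * heps
  · linear_combination (-4*t^3*z0*ε^2 + 4*y*t^2*ε^3*I + 4*x*t^2*ε^2) * hI +
      (4*t^3*z0 - 4*y*t^2*ε*I - 4*x*t^2) * heps
  · intro l0 l1
    linear_combination (-2*l0*l1 - 2*ε^2*I^2*l0*l1) * hxy +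
      (-2*t^2*ε^2*l0*l1 - 4*t^3*z0*ε^2*l1^2 - 4*z*t*ε^2*l0*l1 + 4*y*t^2*ε^3*I*l1^2 + 4*x*t^2*ε^2*l1^2) * hI +
      (2*t^2*l0*l1 + 4*t^3*z0*l1^2 + 4*z*t*l0*l1 - 4*y*t^2*ε*I*l1^2 - 4*x*t^2*l1^2) * heps
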